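/- Fix an integer m ≥ 2 and a partition μ. For k ∈ {0, 1, …, m−1}, let w_k(μ) = #{cells (i,j) of μ : i − j ≡ k (mod m)}, let A_k(μ) be the number of addable k-cells of μ (cells (i,j) not in μ with i − j ≡ k (mod m) such that adding (i,j) to the Young diagram of μ again gives the Young diagram of a partition), and let R_k(μ) be the number of removable k-cells of μ (cells (i,j) of μ with i − j ≡ k (mod m) whose removal from the Young diagram of μ again gives the Young diagram of a partition). Then, with indices read modulo m, A_k(μ) − R_k(μ) = w_{k+1}(μ) + w_{k−1}(μ) − 2·w_k(μ) + χ(k = 0) as integers. Moreover, if μ is an m-core, then for each k at least one of A_k(μ) and R_k(μ) is zero. -/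

import Mathlib

open Polynomial

/-- A partition: a weakly decreasing, finitely supported sequence of naturals;
`parts i` is the `(i+1)`-st part `λ_{i+1}`. -/
structure YPartition where
  parts : ℕ → ℕ
  antitone : ∀ ⦃i j : ℕ⦄, i ≤ j → parts j ≤ parts i
  finite_support : (Function.support parts).Finite

namespace YPartition

/-- Cells, 0-indexed: `(i, j)` is the cell in row `i+1`, column `j+1`. -/
def cells (μ : YPartition) : Set (ℕ × ℕ) := {c | c.2 < μ.parts c.1}

/-- The size `|μ|` of a partition: the number of cells of its Young diagram. -/
noncomputable def size (μ : YPartition) : ℕ := μ.cells.ncard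

/-- The arm length of a cell: the number of cells in its row strictly to its right. -/
def arm (μ : YPartition) (c : ℕ × ℕ) : ℕ := μ.parts c.1 - (c.2 + 1)

/-- The leg length of a cell: the number of cells in its column strictly below it. -/
noncomputable def leg (μ : YPartition) (c : ℕ × ℕ) : ℕ :=
  {r : ℕ | c.1 < r ∧ c.2 < μ.parts r}.ncard

/-- The number of nonzero parts. -/
noncomputable def numParts (μ : YPartition) : ℕ := {i : ℕ | μ.parts i ≠ 0}.ncard

end YPartition

/-- `w_v(μ)`: the number of cells `(i,j)` (1-indexed) with `i - j ≡ v (mod m)`. -/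
noncomputable def wcount (m : ℕ) (μ : YPartition) (v : ℤ) : ℕ :=
  {c ∈ μ.cells | Int.ModEq (m : ℤ) ((c.1 : ℤ) - (c.2 : ℤ)) v}.ncard

/-- The number of addable `v`-cells: cells not in `μ` with label `≡ v (mod m)` whose
addition again yields the Young diagram of a partition. -/
noncomputable def addableCount (m : ℕ) (μ : YPartition) (v : ℤ) : ℕ :=
  {c : ℕ × ℕ | c ∉ μ.cells ∧ Int.ModEq (m : ℤ) ((c.1 : ℤ) - (c.2 : ℤ)) v ∧
    ∃ ν : YPartition, ν.cells = insert c μ.cells}.ncard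

/-- The number of removable `v`-cells: cells of `μ` with label `≡ v (mod m)` whose
removal again yields the Young diagram of a partition. -/
noncomputable def removableCount (m : ℕ) (μ : YPartition) (v : ℤ) : ℕ :=
  {c : ℕ × ℕ | c ∈ μ.cells ∧ Int.ModEq (m : ℤ) ((c.1 : ℤ) - (c.2 : ℤ)) v ∧
    ∃ ν : YPartition, ν.cells = μ.cells \ {c}}.ncard

/-- An `m`-core: no cell has hook length equal to `m`. -/
def IsMCore (m : ℕ) (μ : YPartition) : Prop :=
  ∀ c ∈ μ.cells, μ.arm c + μ.leg c + 1 ≠ m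

/-!
Row `i` (0-indexed, of length `λ_i`) can carry only the addable cell `(i, λ_i)`, of label
`i - λ_i`, and the removable cell `(i, λ_i - 1)`, of label `i - λ_i + 1`; when rows `i` and
`i + 1` have equal length neither cell exists and the two labels coincide. Hence for any weight
`F : ℤ → ℤ`, the sum of `F` over addable labels minus removable labels is
`∑ i < n, (F (i - λ_i) - F (i - λ_i + 1)) + F n`, `n` the number of rows. Along each row the
second difference `F (c - 1) + F (c + 1) - 2 F c` of the labels `c` telescopes, and summing over
the rows gives the same expression minus `F 0`. The indicator of a residue class as `F` gives the
first identity.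

For the second, encode `μ` by its beta-set `{λ_i - i}`: cells of hook length `h` correspond to
pairs `t ∉ betaSet`, `t + h ∈ betaSet`. An addable `k`-cell gives `s ∈ betaSet` with
`s + 1 ∉ betaSet`, a removable `k`-cell gives `t ∉ betaSet` with `t + 1 ∈ betaSet`, and
`s ≡ t (mod m)`. Either `t ≤ s` or `s + 1 ≤ t + 1`, so in both cases some non-element lies a
multiple of `m` below an element, and stepping up by `m` at a time produces a hook of length `m`.
-/

open Finset

theorem Nat.mem_iff_lt_ncard_of_isLowerSet {s : Set ℕ} (hs : s.Finite) (h : IsLowerSet s)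
    (x : ℕ) : x ∈ s ↔ x < s.ncard := by
  rcases h.eq_univ_or_Iio with rfl | ⟨a, rfl⟩
  · exact absurd hs Set.infinite_univ
  · simp

theorem Finset.sum_range_second_diff (G : ℤ → ℤ) (L : ℕ) :
    ∑ j ∈ Finset.range L, (G (j + 1) + G (j - 1) - 2 * G j) =
      G L - G (L - 1) - (G 0 - G (-1)) := by
  have h := Finset.sum_range_sub (fun j : ℕ => G j - G (j - 1)) L
  push_cast at h
  rw [← h]
  exact Finset.sum_congr rfl fun j _ => by rw [add_sub_cancel_right]; ring

open Classical in
theorem Set.ncard_eq_sum_range_of_subset_graph {C : Set (ℕ × ℕ)} (f : ℕ → ℕ) {N : ℕ}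
    (hC : ∀ c ∈ C, c.1 < N ∧ c.2 = f c.1) :
    C.ncard = ∑ i ∈ Finset.range N, if (i, f i) ∈ C then 1 else 0 := by
  have hinj : Function.Injective fun i => (i, f i) := fun a b h => congrArg Prod.fst h
  have hC' : ((((Finset.range N).filter fun i => (i, f i) ∈ C).image fun i => (i, f i) :
      Finset (ℕ × ℕ)) : Set (ℕ × ℕ)) = C := by
    ext c
    simp only [coe_image, coe_filter, Finset.mem_range, mem_image]
    constructor
    · rintro ⟨i, ⟨-, hi⟩, rfl⟩
      exact hi
    · intro hc
      obtain ⟨hi, hfc⟩ := hC c hc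
      exact ⟨c.1, ⟨hi, hfc ▸ hc⟩, hfc ▸ rfl⟩
  conv_lhs => rw [← hC', ncard_coe_finset, Finset.card_image_of_injective _ hinj, card_filter]

def resInd (m : ℕ) (v x : ℤ) : ℤ := if x ≡ v [ZMOD m] then 1 else 0

theorem resInd_add_one (m : ℕ) (v x : ℤ) : resInd m (v + 1) x = resInd m v (x - 1) := by
  simp only [resInd, Int.modEq_iff_dvd, sub_sub_eq_add_sub]

theorem resInd_sub_one (m : ℕ) (v x : ℤ) : resInd m (v - 1) x = resInd m v (x + 1) := by
  simp only [resInd, Int.modEq_iff_dvd, sub_add_eq_sub_sub_swap]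

theorem resInd_natCast_zero {m k : ℕ} (hk : k < m) : resInd m k 0 = if k = 0 then 1 else 0 := by
  simp only [resInd, Int.modEq_iff_dvd, sub_zero, Int.natCast_dvd_natCast]
  congr 1
  exact propext ⟨fun h => Nat.eq_zero_of_dvd_of_lt h hk, fun h => h ▸ dvd_zero m⟩

namespace YPartition

variable (μ : YPartition)

@[simp] theorem mem_cells {i j : ℕ} : (i, j) ∈ μ.cells ↔ j < μ.parts i := Iff.rfl

/-- The part `λ'_{j+1}` of the conjugate partition: the length of (0-indexed) column `j`. -/
noncomputable def colLen (j : ℕ) : ℕ := {r : ℕ | j < μ.parts r}.ncard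

theorem lt_parts_iff_lt_colLen {j r : ℕ} : j < μ.parts r ↔ r < μ.colLen j :=
  Nat.mem_iff_lt_ncard_of_isLowerSet
    (μ.finite_support.subset fun r (hr : j < μ.parts r) => by
      simp only [Function.mem_support]; omega)
    (fun _ _ hba ha => lt_of_lt_of_le ha (μ.antitone hba)) r

theorem parts_eq_zero_iff {i : ℕ} : μ.parts i = 0 ↔ μ.numParts ≤ i := by
  have h : μ.numParts = μ.colLen 0 := by simp only [numParts, colLen, Nat.pos_iff_ne_zero]
  rw [h, ← not_lt, ← lt_parts_iff_lt_colLen]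
  omega

theorem exists_parts_eq_update {i n : ℕ} (h₁ : μ.parts (i + 1) ≤ n)
    (h₂ : i = 0 ∨ n ≤ μ.parts (i - 1)) :
    ∃ ν : YPartition, ν.parts = Function.update μ.parts i n := by
  refine ⟨⟨Function.update μ.parts i n, fun a b hab => ?_, ?_⟩, rfl⟩
  · simp only [Function.update_apply]
    split_ifs with hb ha ha
    · exact le_rfl
    · have := μ.antitone (show a ≤ i - 1 by omega)
      omega
    · have := μ.antitone (show i + 1 ≤ b by omega)
      omega
    · exact μ.antitone hab
  · refine (μ.finite_support.union (Set.finite_singleton i)).subset fun r hr => ?_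
    by_cases h : r = i
    · exact Or.inr h
    · exact Or.inl (by simpa [Function.update_of_ne h] using hr)

theorem addable_iff {i j : ℕ} :
    ((i, j) ∉ μ.cells ∧ ∃ ν : YPartition, ν.cells = insert (i, j) μ.cells) ↔
      j = μ.parts i ∧ (i = 0 ∨ μ.parts i < μ.parts (i - 1)) := by
  constructor
  · rintro ⟨hc, ν, hν⟩
    have hmem : ∀ r s, s < ν.parts r ↔ (r = i ∧ s = j) ∨ s < μ.parts r := fun r s => by
      simpa using Set.ext_iff.mp hν (r, s)
    simp only [mem_cells, not_lt] at hc
    have hj : j < ν.parts i := (hmem i j).2 (Or.inl ⟨rfl, rfl⟩)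
    have h₁ := (hmem i (μ.parts i)).1 (by omega)
    have h₂ := (hmem (i - 1) (μ.parts i)).1 (by have := ν.antitone (Nat.sub_le i 1); omega)
    omega
  · rintro ⟨rfl, h⟩
    obtain ⟨ν, hν⟩ := μ.exists_parts_eq_update (i := i) (n := μ.parts i + 1)
      (by have := μ.antitone (show i ≤ i + 1 by omega); omega) (by omega)
    refine ⟨by simp, ν, Set.ext fun ⟨r, s⟩ => ?_⟩
    by_cases hr : r = i
    · subst hr
      simp only [mem_cells, hν, Function.update_self, Order.lt_add_one_iff, Set.mem_insert_iff,
        Prod.mk.injEq, true_and]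
      omega
    · simp [hν, hr]

theorem removable_iff {i j : ℕ} :
    ((i, j) ∈ μ.cells ∧ ∃ ν : YPartition, ν.cells = μ.cells \ {(i, j)}) ↔
      j + 1 = μ.parts i ∧ μ.parts (i + 1) < μ.parts i := by
  constructor
  · rintro ⟨hc, ν, hν⟩
    have hmem : ∀ r s, s < ν.parts r ↔ s < μ.parts r ∧ ¬(r = i ∧ s = j) := fun r s => by
      simpa using Set.ext_iff.mp hν (r, s)
    simp only [mem_cells] at hc
    have hj : ¬j < ν.parts i := fun h => ((hmem i j).1 h).2 ⟨rfl, rfl⟩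
    have hjν : j + 1 = μ.parts i := by
      by_contra hne
      exact hj (lt_of_lt_of_le (by omega) ((hmem i (μ.parts i - 1)).2 ⟨by omega, by omega⟩))
    refine ⟨hjν, ?_⟩
    by_contra hle
    have := ν.antitone (show i ≤ i + 1 by omega)
    have := (hmem (i + 1) (ν.parts (i + 1))).2 ⟨by omega, by omega⟩
    omega
  · rintro ⟨hj, h⟩
    obtain ⟨ν, hν⟩ := μ.exists_parts_eq_update (i := i) (n := μ.parts i - 1) (by omega)
      (by have := μ.antitone (Nat.sub_le i 1); omega)
    refine ⟨by simp only [mem_cells]; omega, ν, Set.ext fun ⟨r, s⟩ => ?_⟩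
    by_cases hr : r = i
    · subst hr
      simp only [mem_cells, hν, Function.update_self, Set.mem_sdiff, Set.mem_singleton_iff,
        Prod.mk.injEq, true_and]
      omega
    · simp [hν, hr]

theorem addableCount_eq_sum (m : ℕ) (v : ℤ) :
    (addableCount m μ v : ℤ) = ∑ i ∈ range (μ.numParts + 1),
      if i = 0 ∨ μ.parts i < μ.parts (i - 1) then resInd m v (i - μ.parts i) else 0 := by
  have hmem : ∀ i j : ℕ, (i, j) ∈ {c : ℕ × ℕ | c ∉ μ.cells ∧
      (c.1 - c.2 : ℤ) ≡ v [ZMOD m] ∧ ∃ ν : YPartition, ν.cells = insert c μ.cells} ↔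
      (j = μ.parts i ∧ (i = 0 ∨ μ.parts i < μ.parts (i - 1))) ∧
        (i - j : ℤ) ≡ v [ZMOD m] :=
    fun i j => by rw [← addable_iff]; simp only [Set.mem_ofPred_eq]; tauto
  rw [addableCount, Set.ncard_eq_sum_range_of_subset_graph μ.parts (N := μ.numParts + 1)
    fun ⟨i, j⟩ hc => by
      obtain ⟨⟨rfl, hi⟩, -⟩ := (hmem i j).mp hc
      refine ⟨Nat.lt_succ_of_le (not_lt.mp fun hlt => ?_), rfl⟩
      have := μ.parts_eq_zero_iff.mpr (show μ.numParts ≤ i - 1 by omega)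
      omega]
  push_cast
  refine sum_congr rfl fun i _ => ?_
  simp only [hmem, true_and, resInd, ite_and]

theorem removableCount_eq_sum (m : ℕ) (v : ℤ) :
    (removableCount m μ v : ℤ) = ∑ i ∈ range μ.numParts,
      if μ.parts (i + 1) < μ.parts i then resInd m v (i - μ.parts i + 1) else 0 := by
  have hmem : ∀ i j : ℕ, (i, j) ∈ {c : ℕ × ℕ | c ∈ μ.cells ∧
      (c.1 - c.2 : ℤ) ≡ v [ZMOD m] ∧ ∃ ν : YPartition, ν.cells = μ.cells \ {c}} ↔
      (j + 1 = μ.parts i ∧ μ.parts (i + 1) < μ.parts i) ∧ (i - j : ℤ) ≡ v [ZMOD m] :=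
    fun i j => by rw [← removable_iff]; simp only [Set.mem_ofPred_eq]; tauto
  rw [removableCount,
    Set.ncard_eq_sum_range_of_subset_graph (fun i => μ.parts i - 1) (N := μ.numParts)
    fun ⟨i, j⟩ hc => by
      obtain ⟨⟨hj, -⟩, -⟩ := (hmem i j).mp hc
      refine ⟨not_le.mp fun (hle : μ.numParts ≤ i) => ?_, by dsimp only; omega⟩
      have := μ.parts_eq_zero_iff.mpr hle
      omega]
  push_cast
  refine sum_congr rfl fun i _ => ?_
  by_cases hi : μ.parts (i + 1) < μ.parts i
  · have h1 : μ.parts i - 1 + 1 = μ.parts i := by omega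
    have h2 : ((i : ℤ) - ↑(μ.parts i - 1)) = i - μ.parts i + 1 := by omega
    simp only [hmem, h1, hi, h2, true_and, resInd, if_true]
  · simp only [hmem, hi, and_false, false_and, if_false]

theorem wcount_eq_sum (m : ℕ) (v : ℤ) :
    (wcount m μ v : ℤ) =
      ∑ i ∈ range μ.numParts, ∑ j ∈ range (μ.parts i), resInd m v (i - j) := by
  have hcell : ∀ c : ℕ × ℕ, c ∈ μ.cells ↔ c.1 < μ.numParts ∧ c.2 < μ.parts c.1 :=
    fun ⟨i, j⟩ => by
      have := (μ.parts_eq_zero_iff (i := i)).not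
      simp only [mem_cells]
      omega
  set S := (range μ.numParts ×ˢ range (μ.parts 0)).filter fun c => c.2 < μ.parts c.1
  have hS : ∀ c, c ∈ S ↔ c.1 ∈ range μ.numParts ∧ c.2 ∈ range (μ.parts c.1) := by
    intro c
    have := μ.antitone (Nat.zero_le c.1)
    simp only [S, mem_filter, mem_product, mem_range]
    omega
  have hset : {c ∈ μ.cells | (c.1 - c.2 : ℤ) ≡ v [ZMOD m]} =
      ↑(S.filter fun c => (c.1 - c.2 : ℤ) ≡ v [ZMOD m]) := by
    ext c
    rw [Set.mem_sep_iff, mem_coe, mem_filter, hS, mem_range, mem_range, hcell]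
  rw [wcount, hset, Set.ncard_coe_finset, card_filter]
  push_cast
  exact sum_finset_product S _ _ hS

theorem sum_addable_sub_sum_removable (F : ℤ → ℤ) :
    ((∑ i ∈ range (μ.numParts + 1),
        if i = 0 ∨ μ.parts i < μ.parts (i - 1) then F (i - μ.parts i) else 0) -
      ∑ i ∈ range μ.numParts,
        if μ.parts (i + 1) < μ.parts i then F (i - μ.parts i + 1) else 0) =
    ∑ i ∈ range μ.numParts, ∑ j ∈ range (μ.parts i),
        (F (i - j - 1) + F (i - j + 1) - 2 * F (i - j)) + F 0 := by
  have hrow : ∀ i : ℕ,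
      ∑ j ∈ range (μ.parts i), (F (i - j - 1) + F (i - j + 1) - 2 * F (i - j)) =
        F (i - μ.parts i) - F (i - μ.parts i + 1) - (F i - F (i + 1)) := fun i => by
    have := sum_range_second_diff (fun y => F (i - y)) (μ.parts i)
    convert this using 3 <;> ring_nf
  have hstep : ∀ i : ℕ,
      ((if i + 1 = 0 ∨ μ.parts (i + 1) < μ.parts (i + 1 - 1) then
        F ((i + 1 : ℕ) - μ.parts (i + 1)) else 0) -
        if μ.parts (i + 1) < μ.parts i then F (i - μ.parts i + 1) else 0) =
      F ((i + 1 : ℕ) - μ.parts (i + 1)) - F (i - μ.parts i + 1) := fun i => by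
    simp only [Nat.add_one_ne_zero, false_or, add_tsub_cancel_right]
    split_ifs with h
    · rfl
    · rw [le_antisymm (μ.antitone (Nat.le_succ i)) (not_lt.mp h)]
      push_cast
      ring_nf
  have hlast : μ.parts μ.numParts = 0 := μ.parts_eq_zero_iff.mpr le_rfl
  rw [sum_range_succ', add_sub_right_comm, ← sum_sub_distrib]
  simp only [hstep, hrow, sum_sub_distrib, true_or, if_true]
  have hshift := (sum_range_succ' (fun i : ℕ => F (i - μ.parts i)) μ.numParts).symm.trans
    (sum_range_succ _ μ.numParts)
  have htel := sum_range_sub (fun i : ℕ => F i) μ.numParts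
  rw [hlast] at hshift
  push_cast [sub_zero] at hshift htel ⊢
  rw [sum_sub_distrib] at htel
  linarith

theorem addableCount_sub_removableCount (m : ℕ) (v : ℤ) :
    (addableCount m μ v : ℤ) - removableCount m μ v =
      wcount m μ (v + 1) + wcount m μ (v - 1) - 2 * wcount m μ v + resInd m v 0 := by
  rw [addableCount_eq_sum, removableCount_eq_sum, sum_addable_sub_sum_removable,
    wcount_eq_sum, wcount_eq_sum, wcount_eq_sum]
  simp only [resInd_add_one, resInd_sub_one, mul_sum, ← sum_add_distrib, ← sum_sub_distrib]

theorem leg_add {i j : ℕ} (h : j < μ.parts i) : μ.leg (i, j) + i + 1 = μ.colLen j := by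
  have hset : {r : ℕ | i < r ∧ j < μ.parts r} = Set.Ioo i (μ.colLen j) := by
    ext r
    simp [lt_parts_iff_lt_colLen]
  have := (μ.lt_parts_iff_lt_colLen).mp h
  rw [leg, hset, Set.ncard_Ioo_nat]
  omega

def beta (i : ℕ) : ℤ := μ.parts i - i

def betaSet : Set ℤ := Set.range μ.beta

theorem beta_strictAnti : StrictAnti μ.beta := fun a b hab => by
  have := μ.antitone hab.le
  simp only [beta]
  omega

theorem hook_eq {i j : ℕ} (h : j < μ.parts i) :
    ((μ.arm (i, j) + μ.leg (i, j) + 1 : ℕ) : ℤ) = μ.beta i - (j + 1 - μ.colLen j) := by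
  have := μ.leg_add h
  simp only [arm, beta]
  omega

/-- The column is `t + e - 1`, where `e` is the first row with `beta e < t`. -/
theorem exists_hook_eq_of_notMem {t : ℤ} (ht : t ∉ μ.betaSet) {i : ℕ} (hi : t < μ.beta i) :
    ∃ j < μ.parts i, ((μ.arm (i, j) + μ.leg (i, j) + 1 : ℕ) : ℤ) = μ.beta i - t := by
  have hex : ∃ r, μ.beta r < t := ⟨μ.parts 0 + t.natAbs + 1, by
    have := μ.antitone (Nat.zero_le (μ.parts 0 + t.natAbs + 1))
    simp only [beta]
    omega⟩
  classical
  set e := Nat.find hex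
  have hbe : μ.beta e < t := Nat.find_spec hex
  have hbefore : ∀ r < e, t < μ.beta r := fun r hr =>
    lt_of_le_of_ne (not_lt.mp (Nat.find_min hex hr)) fun h => ht ⟨r, h.symm⟩
  have hie : i < e := μ.beta_strictAnti.lt_iff_gt.mp (hbe.trans hi)
  obtain ⟨j, hj⟩ : ∃ j : ℕ, (j : ℤ) = t + e - 1 := ⟨(t + e - 1).toNat, by
    have : (0 : ℤ) ≤ μ.parts e := Nat.cast_nonneg _
    simp only [beta] at hbe
    omega⟩
  have hcol : ∀ r, j < μ.parts r ↔ r < e := fun r => by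
    constructor
    · intro hr
      by_contra! her
      have := μ.antitone her
      simp only [beta] at hbe
      omega
    · intro hr
      have := μ.antitone (Nat.le_sub_one_of_lt hr)
      have := hbefore (e - 1) (by omega)
      simp only [beta] at this
      omega
  have hcolLen : μ.colLen j = e := by
    have h := fun r => (hcol r).symm.trans μ.lt_parts_iff_lt_colLen
    have := h e
    have := h (μ.colLen j)
    omega
  refine ⟨j, (hcol i).mpr hie, ?_⟩
  rw [μ.hook_eq ((hcol i).mpr hie), hcolLen, hj]
  ring

theorem beta_add_one_notMem {i : ℕ} (h : i = 0 ∨ μ.parts i < μ.parts (i - 1)) :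
    μ.beta i + 1 ∉ μ.betaSet := by
  rintro ⟨r, hr⟩
  have hri : r < i := μ.beta_strictAnti.lt_iff_gt.mp (by omega)
  have := μ.beta_strictAnti.antitone (Nat.le_sub_one_of_lt hri)
  simp only [beta] at hr this
  push_cast [Nat.one_le_iff_ne_zero.mpr (by omega : i ≠ 0)] at this
  omega

theorem beta_sub_one_notMem {i : ℕ} (h : μ.parts (i + 1) < μ.parts i) :
    μ.beta i - 1 ∉ μ.betaSet := by
  rintro ⟨r, hr⟩
  have hir : i < r := μ.beta_strictAnti.lt_iff_gt.mp (by omega)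
  have := μ.beta_strictAnti.antitone (show i + 1 ≤ r from hir)
  simp only [beta] at hr this
  push_cast at this
  omega

end YPartition

namespace IsMCore

open YPartition

variable {m : ℕ} {μ : YPartition}

theorem add_notMem (hμ : IsMCore m μ) {t : ℤ} (ht : t ∉ μ.betaSet) :
    t + m ∉ μ.betaSet := by
  rintro ⟨i, hi⟩
  rcases Nat.eq_zero_or_pos m with rfl | hm
  · exact ht ⟨i, by simpa using hi⟩
  obtain ⟨j, hj, hhook⟩ := μ.exists_hook_eq_of_notMem ht (show t < μ.beta i by omega)
  exact hμ (i, j) hj (by omega)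

theorem add_mul_notMem (hμ : IsMCore m μ) {t : ℤ} (ht : t ∉ μ.betaSet) (d : ℕ) :
    t + m * d ∉ μ.betaSet := by
  induction d with
  | zero => simpa using ht
  | succ d ih => simpa [mul_add, add_assoc] using hμ.add_notMem ih

theorem notMem_of_modEq (hμ : IsMCore m μ) {u w : ℤ} (hu : u ∉ μ.betaSet)
    (huw : u ≤ w) (h : u ≡ w [ZMOD m]) : w ∉ μ.betaSet := by
  obtain ⟨d, hd⟩ := Int.modEq_iff_dvd.mp h
  rcases Nat.eq_zero_or_pos m with rfl | hm
  · simp_all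
  lift d to ℕ using by nlinarith
  simpa [← hd] using hμ.add_mul_notMem hu d

theorem addableCount_eq_zero_or_removableCount_eq_zero (hμ : IsMCore m μ) (v : ℤ) :
    addableCount m μ v = 0 ∨ removableCount m μ v = 0 := by
  by_contra! h
  obtain ⟨⟨i, j⟩, hcA, hvA, hA⟩ := Set.nonempty_of_ncard_ne_zero h.1
  obtain ⟨⟨r, l⟩, hcR, hvR, hR⟩ := Set.nonempty_of_ncard_ne_zero h.2
  obtain ⟨rfl, hi⟩ := μ.addable_iff.mp ⟨hcA, hA⟩
  obtain ⟨hl, hr⟩ := μ.removable_iff.mp ⟨hcR, hR⟩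
  have hmod : μ.beta r - 1 ≡ μ.beta i [ZMOD m] := by
    have h₁ : μ.beta r - 1 = -((r : ℤ) - l) := by simp only [beta]; omega
    have h₂ : μ.beta i = -((i : ℤ) - μ.parts i) := by simp only [beta]; ring
    rw [h₁, h₂]
    exact (hvR.trans hvA.symm).neg
  rcases le_total (μ.beta r - 1) (μ.beta i) with hle | hle
  · exact hμ.notMem_of_modEq (μ.beta_sub_one_notMem hr) hle hmod ⟨i, rfl⟩
  · exact hμ.notMem_of_modEq (μ.beta_add_one_notMem hi) (by omega) (hmod.symm.add_right 1)
      ⟨r, by ring⟩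

end IsMCore

theorem statement18_general (m : ℕ) (μ : YPartition) :
    (∀ k : ℕ, k < m →
      (addableCount m μ (k : ℤ) : ℤ) - (removableCount m μ (k : ℤ) : ℤ) =
        (wcount m μ ((k : ℤ) + 1) : ℤ) + (wcount m μ ((k : ℤ) - 1) : ℤ) -
          2 * (wcount m μ (k : ℤ) : ℤ) + (if k = 0 then 1 else 0)) ∧
    (IsMCore m μ → ∀ k : ℕ, k < m →
      addableCount m μ (k : ℤ) = 0 ∨ removableCount m μ (k : ℤ) = 0) := by
  refine ⟨fun k hk => ?_, fun hμ k _ => hμ.addableCount_eq_zero_or_removableCount_eq_zero k⟩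
  rw [μ.addableCount_sub_removableCount, resInd_natCast_zero hk]

theorem statement18 (m : ℕ) (hm : 2 ≤ m) (μ : YPartition) :
    (∀ k : ℕ, k < m →
      (addableCount m μ (k : ℤ) : ℤ) - (removableCount m μ (k : ℤ) : ℤ) =
        (wcount m μ ((k : ℤ) + 1) : ℤ) + (wcount m μ ((k : ℤ) - 1) : ℤ) -
          2 * (wcount m μ (k : ℤ) : ℤ) + (if k = 0 then 1 else 0)) ∧
    (IsMCore m μ → ∀ k : ℕ, k < m →
      addableCount m μ (k : ℤ) = 0 ∨ removableCount m μ (k : ℤ) = 0) :=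
  statement18_general m μ
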